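/- arXiv:1911.01348 — 5 statements merged into one kernel-verified Lean document; each statement's English description precedes it below -/
import Mathlib

section
/- Let m̄, m, V be real numbers with 0 < m̄, m̄ ≤ 2*m, 0 < m, m < V, and m̄ < V. Then m * Real.log (m̄ / m) + (V - m) * Real.log ((V - m̄) / (V - m)) ≤ -(m - m̄)^2 / (4 * m). -/
/-!
Bound the first term with `log x ≤ (x - 1) - (x - 1)²/4` for `0 < x ≤ 2`, which holds because the
difference of the two sides has derivative `(x - 1)(2 - x)/(2x)`, hence is minimal at `x = 1`, and
the second with `log y ≤ y - 1`. The linear terms `m̄ - m` and `m - m̄` then cancel.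
-/

open Real Set

lemma hasDerivAt_sub_one_sub_sq_div_four_sub_log {x : ℝ} (hx : x ≠ 0) :
    HasDerivAt (fun y => y - 1 - (y - 1) ^ 2 / 4 - log y) ((x - 1) * (2 - x) / (2 * x)) x := by
  refine ((((hasDerivAt_id' x).sub_const 1).sub
    ((((hasDerivAt_id' x).sub_const 1).pow 2).div_const 4)).sub (hasDerivAt_log hx)).congr_deriv ?_
  field_simp
  ring

theorem log_le_sub_one_sub_sq_div_four {x : ℝ} (hx : 0 < x) (hx2 : x ≤ 2) :
    log x ≤ x - 1 - (x - 1) ^ 2 / 4 := by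
  set g : ℝ → ℝ := fun y => y - 1 - (y - 1) ^ 2 / 4 - log y
  have hg : ∀ y, 0 < y → HasDerivAt g ((y - 1) * (2 - y) / (2 * y)) y := fun y hy =>
    hasDerivAt_sub_one_sub_sq_div_four_sub_log hy.ne'
  have hcont : ContinuousOn g (Ioi 0) := fun y hy => (hg y hy).continuousAt.continuousWithinAt
  suffices g 1 ≤ g x by simpa [g] using this
  rcases le_total x 1 with h | h
  · have hanti : AntitoneOn g (Ioc 0 1) := by
      refine antitoneOn_of_deriv_nonpos (convex_Ioc 0 1) (hcont.mono Ioc_subset_Ioi_self)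
        (fun y hy => ?_) (fun y hy => ?_) <;> rw [interior_Ioc] at hy
      · exact (hg y hy.1).differentiableAt.differentiableWithinAt
      · rw [(hg y hy.1).deriv]
        exact div_nonpos_of_nonpos_of_nonneg
          (mul_nonpos_of_nonpos_of_nonneg (by linarith [hy.2]) (by linarith [hy.2]))
          (by linarith [hy.1])
    exact hanti ⟨hx, h⟩ ⟨one_pos, le_rfl⟩ h
  · have hmono : MonotoneOn g (Icc 1 2) := by
      refine monotoneOn_of_deriv_nonneg (convex_Icc 1 2)
        (hcont.mono fun y hy => one_pos.trans_le hy.1) (fun y hy => ?_) (fun y hy => ?_) <;>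
        rw [interior_Icc] at hy
      · exact (hg y (one_pos.trans hy.1)).differentiableAt.differentiableWithinAt
      · rw [(hg y (one_pos.trans hy.1)).deriv]
        exact div_nonneg (mul_nonneg (by linarith [hy.1]) (by linarith [hy.2]))
          (by linarith [hy.1])
    exact hmono ⟨le_rfl, one_le_two⟩ ⟨h, hx2⟩ h

theorem mul_log_div_le_sub {a b : ℝ} (ha : 0 < a) (hb : 0 < b) : a * log (b / a) ≤ b - a := by
  calc a * log (b / a) ≤ a * (b / a - 1) :=
        mul_le_mul_of_nonneg_left (log_le_sub_one_of_pos (div_pos hb ha)) ha.le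
    _ = b - a := by field_simp

theorem mul_log_div_le_sub_sub_sq_div {a b : ℝ} (ha : 0 < a) (hb : 0 < b) (hba : b ≤ 2 * a) :
    a * log (b / a) ≤ b - a - (b - a) ^ 2 / (4 * a) := by
  have hx2 : b / a ≤ 2 := (div_le_iff₀ ha).2 hba
  calc a * log (b / a) ≤ a * (b / a - 1 - (b / a - 1) ^ 2 / 4) :=
        mul_le_mul_of_nonneg_left (log_le_sub_one_sub_sq_div_four (div_pos hb ha) hx2) ha.le
    _ = b - a - (b - a) ^ 2 / (4 * a) := by field_simp

theorem stmt_4 (mbar m V : ℝ) (h1 : 0 < mbar) (h2 : mbar ≤ 2 * m) (h3 : 0 < m)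
    (h4 : m < V) (h5 : mbar < V) :
    m * Real.log (mbar / m) + (V - m) * Real.log ((V - mbar) / (V - m)) ≤
      -(m - mbar) ^ 2 / (4 * m) := by
  have hm := mul_log_div_le_sub_sub_sq_div h3 h1 h2
  have hVm := mul_log_div_le_sub (sub_pos.2 h4) (sub_pos.2 h5)
  calc _ ≤ (mbar - m - (mbar - m) ^ 2 / (4 * m)) + (V - mbar - (V - m)) := add_le_add hm hVm
    _ = -(m - mbar) ^ 2 / (4 * m) := by ring
end

section
/- For every natural number m ≥ 24, the product over integers j with ⌊m/3⌋ + 1 ≤ j ≤ ⌊m/2⌋ of j / (m - j + 1) is at most Real.exp (-(m : ℝ) / 24). -/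
/-!
Writing each factor as `j / (m - j + 1) = 1 - (m + 1 - 2j) / (m - j + 1)` and using
`1 - t ≤ e^{-t}`, it suffices to show `∑ (m + 1 - 2j) / (m - j + 1) ≥ m / 24` over
`⌊m/3⌋ < j ≤ ⌊m/2⌋`. On a block `a < j ≤ c` the denominators are at most `m - a`, and the
numerators sum to `(c - a)(m - a - c)`. A single block from `⌊m/3⌋` to `⌊m/2⌋` can fall short of
`m/24` by `O(1/m)`, so the range is split at `⌊5m/12⌋`: for `m = 12q + r` the two block bounds add
up to `29q/56 + O(1)`, against `m/24 = 28q/56 + O(1)`, and for each residue `r` this is a cubic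
inequality in `q ≥ 2`.
-/

open Finset

theorem div_le_exp_neg_sub_div {x y : ℝ} (hy : 0 < y) : x / y ≤ Real.exp (-((y - x) / y)) := by
  have h : x / y = -((y - x) / y) + 1 := by field_simp; ring
  rw [h]
  exact Real.add_one_le_exp _

theorem prod_Ioc_div_le_exp_neg_sum {m a b : ℕ} (hbm : b ≤ m) :
    ∏ j ∈ Ioc a b, ((j : ℝ) / (m - j + 1)) ≤
      Real.exp (-∑ j ∈ Ioc a b, ((m : ℝ) + 1 - 2 * j) / (m - j + 1)) := by
  have hden : ∀ j ∈ Ioc a b, (0 : ℝ) < m - j + 1 := fun j hj => by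
    have hjm : (j : ℝ) ≤ m := by exact_mod_cast (mem_Ioc.mp hj).2.trans hbm
    linarith
  rw [← sum_neg_distrib, Real.exp_sum]
  refine prod_le_prod (fun j hj => div_nonneg j.cast_nonneg (hden j hj).le) fun j hj => ?_
  rw [show (m : ℝ) + 1 - 2 * j = m - j + 1 - j by ring]
  exact div_le_exp_neg_sub_div (hden j hj)

theorem sum_Ioc_add_one_sub_two_mul (x : ℝ) {a c : ℕ} (hac : a ≤ c) :
    ∑ j ∈ Ioc a c, (x + 1 - 2 * j) = ((c : ℝ) - a) * (x - a - c) := by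
  induction c, hac using Nat.le_induction with
  | base => simp
  | succ c hac ih =>
    rw [sum_Ioc_succ_top (by omega), ih]
    push_cast
    ring

noncomputable def blockBound (m a c : ℕ) : ℝ :=
  ((c : ℝ) - a) * (m - a - c) / (m - a)

theorem blockBound_le_sum_Ioc_div {m a c : ℕ} (hac : a ≤ c) (hcm : 2 * c ≤ m) :
    blockBound m a c ≤ ∑ j ∈ Ioc a c, ((m : ℝ) + 1 - 2 * j) / (m - j + 1) := by
  rw [blockBound, ← sum_Ioc_add_one_sub_two_mul _ hac, sum_div]
  refine sum_le_sum fun j hj => ?_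
  obtain ⟨haj, hjc⟩ := mem_Ioc.mp hj
  have haj' : (a : ℝ) + 1 ≤ j := by exact_mod_cast haj
  have hjm : 2 * (j : ℝ) ≤ m := by exact_mod_cast (by omega : 2 * j ≤ m)
  exact div_le_div_of_nonneg_left (by linarith) (by linarith) (by linarith)

theorem le_div_add_div_of_mul_le {t a b c d : ℝ} (hb : 0 < b) (hd : 0 < d)
    (h : t * (b * d) ≤ a * d + b * c) : t ≤ a / b + c / d := by
  rwa [div_add_div _ _ hb.ne' hd.ne', le_div_iff₀ (mul_pos hb hd)]

theorem div_twentyFour_le_blockBound_add {m : ℕ} (hm : 24 ≤ m) :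
    (m : ℝ) / 24 ≤ blockBound m (m / 3) (5 * m / 12) + blockBound m (5 * m / 12) (m / 2) := by
  simp only [blockBound]
  obtain ⟨q, r, hr, rfl⟩ : ∃ q r, r < 12 ∧ m = 12 * q + r :=
    ⟨m / 12, m % 12, Nat.mod_lt _ (by norm_num), by omega⟩
  have hq : (2 : ℝ) ≤ q := by exact_mod_cast (by omega : 2 ≤ q)
  rw [show (12 * q + r) / 3 = 4 * q + r / 3 by omega,
    show (12 * q + r) / 2 = 6 * q + r / 2 by omega,
    show 5 * (12 * q + r) / 12 = 5 * q + 5 * r / 12 by omega]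
  interval_cases r <;> norm_num <;> apply le_div_add_div_of_mul_le <;> ring_nf <;>
    nlinarith [pow_pos (by linarith : (0 : ℝ) < q) 3]

theorem stmt_5 (m : ℕ) (hm : 24 ≤ m) :
    (∏ j ∈ Finset.Icc (m / 3 + 1) (m / 2), ((j : ℝ) / ((m : ℝ) - (j : ℝ) + 1))) ≤
      Real.exp (-(m : ℝ) / 24) := by
  rw [Icc_add_one_left_eq_Ioc, neg_div]
  refine (prod_Ioc_div_le_exp_neg_sum (by omega)).trans (Real.exp_le_exp.mpr (neg_le_neg ?_))
  rw [← sum_Ioc_consecutive _ (by omega : m / 3 ≤ 5 * m / 12) (by omega : 5 * m / 12 ≤ m / 2)]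
  exact (div_twentyFour_le_blockBound_add hm).trans <|
    add_le_add (blockBound_le_sum_Ioc_div (by omega) (by omega))
      (blockBound_le_sum_Ioc_div (by omega) (by omega))
end

section
/- Let V, m be natural numbers with m ≥ 24 and 2*m ≤ V, and set V₁ = ⌊V/2⌋ and V₂ = ⌈V/2⌉. Then ∑_{j = ⌊m/3⌋+1}^{2⌊m/3⌋} C(V₁, j) * C(V₂, m - j) ≥ C(V, m) * (1 - (2*m/3) * Real.exp (-(m:ℝ)/24)), where C(a,b) denotes the binomial coefficient a choose b. -/
/-!
Write `t j = C(⌊V/2⌋, j) C(⌈V/2⌉, m - j)`, so that `∑ⱼ t j = C(V, m)` (Vandermonde) and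
`t j / C(V, m) = C(m, j) C(V - m, ⌊V/2⌋ - j) / C(V, ⌊V/2⌋)` is hypergeometric. Since
`n C(n, ⌊n/2⌋)²` (which is `≈ 2·4ⁿ/π`) grows by a factor at least 16 every two steps, passing from
`V - m ≥ m` to `V` multiplies the largest binomial coefficient by at least `2^m / 3`; hence
`t j ≤ 3 C(m, j) 2^(-m) C(V, m)`, i.e. the hypergeometric law is dominated by three times the
binomial law `Bin(m, 1/2)`. The two tails of the binomial law are bounded by the exponential
moment trick, `∑_{j ≤ J} C(m, j) ≤ 3^m / 2^(m - J)`, which leaves a tail mass of at most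
`9 · 2^(m/3) (3/4)^m C(V, m) ≤ 9 e^(-m/24) C(V, m)`.
-/

open Finset

namespace Nat

theorem choose_succ_succ_mul_mul (n k : ℕ) :
    (n + 2).choose (k + 1) * (k + 1) * (n + 1 - k) = (n + 2) * (n + 1) * n.choose k := by
  rw [← add_one_mul_choose_eq, mul_assoc, ← choose_mul_succ_eq]
  ring

theorem sixteen_mul_choose_middle_sq_le (n : ℕ) :
    16 * (n * n.choose (n / 2) ^ 2) ≤ (n + 2) * (n + 2).choose ((n + 2) / 2) ^ 2 := by
  set k := n / 2
  have hstep := choose_succ_succ_mul_mul n k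
  rw [show (n + 2) / 2 = k + 1 by omega]
  have hpos : 0 < ((k + 1) * (n + 1 - k)) ^ 2 := by
    have : 0 < n + 1 - k := by omega
    positivity
  refine Nat.le_of_mul_le_mul_right ?_ hpos
  have hpoly : 16 * n * ((k + 1) * (n + 1 - k)) ^ 2 ≤ (n + 2) ^ 3 * (n + 1) ^ 2 := by
    obtain ⟨i, rfl | rfl⟩ := n.even_or_odd'
    · rw [show 2 * i + 1 - k = k + 1 by omega, show i = k by omega]
      nlinarith [sq_nonneg k]
    · rw [show 2 * i + 1 + 1 - k = k + 2 by omega, show i = k by omega]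
      nlinarith [sq_nonneg k]
  calc 16 * (n * n.choose k ^ 2) * ((k + 1) * (n + 1 - k)) ^ 2
      = 16 * n * ((k + 1) * (n + 1 - k)) ^ 2 * n.choose k ^ 2 := by ring
    _ ≤ (n + 2) ^ 3 * (n + 1) ^ 2 * n.choose k ^ 2 := Nat.mul_le_mul_right _ hpoly
    _ = (n + 2) * ((n + 2).choose (k + 1) * (k + 1) * (n + 1 - k)) ^ 2 := by rw [hstep]; ring
    _ = (n + 2) * (n + 2).choose (k + 1) ^ 2 * ((k + 1) * (n + 1 - k)) ^ 2 := by ring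

theorem sixteen_pow_mul_choose_middle_sq_le (n d : ℕ) :
    16 ^ d * (n * n.choose (n / 2) ^ 2) ≤
      (n + 2 * d) * (n + 2 * d).choose ((n + 2 * d) / 2) ^ 2 := by
  induction d with
  | zero => simp
  | succ d ih =>
    calc 16 ^ (d + 1) * (n * n.choose (n / 2) ^ 2)
        = 16 * (16 ^ d * (n * n.choose (n / 2) ^ 2)) := by ring
      _ ≤ 16 * ((n + 2 * d) * (n + 2 * d).choose ((n + 2 * d) / 2) ^ 2) :=
        Nat.mul_le_mul_left _ ih
      _ ≤ _ := sixteen_mul_choose_middle_sq_le _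

theorem four_pow_mul_choose_sq_le {N m : ℕ} (k : ℕ) (hmN : m ≤ N) :
    4 ^ m * N.choose k ^ 2 ≤ 8 * (N + m).choose ((N + m) / 2) ^ 2 := by
  rcases N.eq_zero_or_pos with rfl | hN
  · obtain rfl : m = 0 := by omega
    cases k <;> simp
  -- with `M = N + (m mod 2)` the remaining `m - (M - N)` steps come in pairs
  obtain ⟨d, r, hr, rfl⟩ : ∃ d r, r ≤ 1 ∧ m = r + 2 * d := ⟨m / 2, m % 2, by omega, by omega⟩
  set M := N + r
  have hchoose : N.choose k ≤ M.choose (M / 2) :=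
    (choose_le_middle k N).trans ((choose_mono _ (by omega)).trans (choose_le_middle _ _))
  have hpow : 4 ^ (r + 2 * d) ≤ 4 * 16 ^ d := by
    rw [pow_add, pow_mul]; gcongr
    · exact pow_le_pow_right₀ (by norm_num) hr
    · norm_num
  refine Nat.le_of_mul_le_mul_right ?_ (show 0 < M by omega)
  calc 4 ^ (r + 2 * d) * N.choose k ^ 2 * M ≤ 4 * (16 ^ d * (M * M.choose (M / 2) ^ 2)) := by
        calc _ ≤ 4 * 16 ^ d * M.choose (M / 2) ^ 2 * M := by gcongr
          _ = _ := by ring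
    _ ≤ 4 * ((M + 2 * d) * (M + 2 * d).choose ((M + 2 * d) / 2) ^ 2) :=
        Nat.mul_le_mul_left _ (sixteen_pow_mul_choose_middle_sq_le M d)
    _ ≤ 8 * (N + (r + 2 * d)).choose ((N + (r + 2 * d)) / 2) ^ 2 * M := by
        rw [show M + 2 * d = N + (r + 2 * d) by omega]
        have : 4 * (N + (r + 2 * d)) ≤ 8 * M := by omega
        nlinarith

theorem two_pow_mul_choose_le {N m : ℕ} (k : ℕ) (hmN : m ≤ N) :
    2 ^ m * N.choose k ≤ 3 * (N + m).choose ((N + m) / 2) := by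
  refine (Nat.pow_le_pow_iff_left two_ne_zero).mp ?_
  calc (2 ^ m * N.choose k) ^ 2 = 4 ^ m * N.choose k ^ 2 := by
        rw [mul_pow, ← pow_mul, mul_comm m, pow_mul]; norm_num
    _ ≤ 8 * (N + m).choose ((N + m) / 2) ^ 2 := four_pow_mul_choose_sq_le k hmN
    _ ≤ (3 * (N + m).choose ((N + m) / 2)) ^ 2 := by rw [mul_pow]; gcongr; norm_num

theorem choose_mul_choose_mul_choose_add {a b m j : ℕ} (hjm : j ≤ m) (hja : j ≤ a)
    (hmb : m - j ≤ b) :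
    a.choose j * b.choose (m - j) * (a + b).choose a =
      m.choose j * (a + b - m).choose (a - j) * (a + b).choose m := by
  set n := a + b
  have h₁ : n.choose a * a.choose j = n.choose j * (n - j).choose b := by
    rw [choose_mul hja, choose_symm_of_eq_add (show n - j = a - j + b by omega)]
  have h₂ : (n - j).choose b * b.choose (m - j) =
      (n - j).choose (m - j) * (n - m).choose (a - j) := by
    rw [choose_mul hmb, show n - j - (m - j) = n - m by omega,
      choose_symm_of_eq_add (show n - m = b - (m - j) + (a - j) by omega)]
  calc a.choose j * b.choose (m - j) * n.choose a
      = n.choose j * ((n - j).choose b * b.choose (m - j)) := by rw [← mul_assoc, ← h₁]; ring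
    _ = (n.choose m * m.choose j) * (n - m).choose (a - j) := by
        rw [h₂, choose_mul hjm]; ring
    _ = _ := by ring

theorem choose_half_mul_choose_half_mul_two_pow_le {V m j : ℕ} (hjm : j ≤ m) (hV : 2 * m ≤ V) :
    (V / 2).choose j * (V - V / 2).choose (m - j) * 2 ^ m ≤ 3 * V.choose m * m.choose j := by
  have hident := choose_mul_choose_mul_choose_add (a := V / 2) (b := V - V / 2) hjm (by omega)
    (by omega)
  rw [show V / 2 + (V - V / 2) = V by omega] at hident
  have hmiddle := two_pow_mul_choose_le (V / 2 - j) (show m ≤ V - m by omega)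
  rw [show V - m + m = V by omega] at hmiddle
  refine Nat.le_of_mul_le_mul_right ?_ (choose_pos (show V / 2 ≤ V by omega))
  calc (V / 2).choose j * (V - V / 2).choose (m - j) * 2 ^ m * V.choose (V / 2)
      = m.choose j * V.choose m * (2 ^ m * (V - m).choose (V / 2 - j)) := by
        rw [mul_right_comm, hident]; ring
    _ ≤ m.choose j * V.choose m * (3 * V.choose (V / 2)) := Nat.mul_le_mul_left _ hmiddle
    _ = 3 * V.choose m * m.choose j * V.choose (V / 2) := by ring

end Nat

theorem sum_choose_mul_le_add_pow {m : ℕ} {s : Finset ℕ} {x y c : ℝ} (hs : s ⊆ range (m + 1))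
    (hx : 0 ≤ x) (hy : 0 ≤ y) (hc : ∀ j ∈ s, c ≤ x ^ j * y ^ (m - j)) :
    (∑ j ∈ s, (m.choose j : ℝ)) * c ≤ (x + y) ^ m := by
  rw [sum_mul, add_pow]
  calc ∑ j ∈ s, (m.choose j : ℝ) * c ≤ ∑ j ∈ s, x ^ j * y ^ (m - j) * m.choose j :=
        sum_le_sum fun j hj => by rw [mul_comm]; gcongr; exact hc j hj
    _ ≤ _ := sum_le_sum_of_subset_of_nonneg hs fun _ _ _ => by positivity

theorem sum_choose_half_mul_choose_half_mul_le {V m : ℕ} {s : Finset ℕ} {x y c : ℝ}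
    (hV : 2 * m ≤ V) (hs : s ⊆ range (m + 1)) (hx : 0 ≤ x) (hy : 0 ≤ y) (hc₀ : 0 ≤ c)
    (hc : ∀ j ∈ s, c ≤ x ^ j * y ^ (m - j)) :
    (∑ j ∈ s, ((V / 2).choose j : ℝ) * ((V - V / 2).choose (m - j) : ℝ)) * (2 ^ m * c) ≤
      3 * (x + y) ^ m * V.choose m := by
  have hterm : ∀ j ∈ s, ((V / 2).choose j : ℝ) * ((V - V / 2).choose (m - j) : ℝ) * 2 ^ m ≤
      3 * V.choose m * m.choose j := fun j hj => by
    exact_mod_cast Nat.choose_half_mul_choose_half_mul_two_pow_le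
      (Nat.lt_succ_iff.mp (mem_range.mp (hs hj))) hV
  calc _ = (∑ j ∈ s, ((V / 2).choose j : ℝ) * ((V - V / 2).choose (m - j) : ℝ) * 2 ^ m) * c := by
        rw [sum_mul, sum_mul]; simp only [mul_assoc]
    _ ≤ (∑ j ∈ s, 3 * V.choose m * (m.choose j : ℝ)) * c :=
        mul_le_mul_of_nonneg_right (sum_le_sum hterm) hc₀
    _ = 3 * V.choose m * ((∑ j ∈ s, (m.choose j : ℝ)) * c) := by rw [← mul_sum]; ring
    _ ≤ 3 * V.choose m * (x + y) ^ m := by gcongr; exact sum_choose_mul_le_add_pow hs hx hy hc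
    _ = _ := by ring

theorem three_pow_eq_of_add_eq {a b m : ℕ} (h : a + b = m) :
    (3 : ℝ) ^ m = 2 ^ a * (3 / 4) ^ m * (2 ^ m * 2 ^ b) := by
  calc (3 : ℝ) ^ m = (3 / 4) ^ m * 2 ^ m * 2 ^ m := by rw [← mul_pow, ← mul_pow]; norm_num
    _ = (3 / 4) ^ m * 2 ^ m * (2 ^ a * 2 ^ b) := by rw [← pow_add, h]
    _ = _ := by ring

theorem sum_range_choose_half_mul_choose_half_le {V m J : ℕ} (hV : 2 * m ≤ V) (hJ : J ≤ m) :
    ∑ j ∈ range (J + 1), ((V / 2).choose j : ℝ) * ((V - V / 2).choose (m - j) : ℝ) ≤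
      3 * 2 ^ J * (3 / 4) ^ m * V.choose m := by
  have h := sum_choose_half_mul_choose_half_mul_le (m := m) (s := range (J + 1)) (x := 1) (y := 2)
    (c := 2 ^ (m - J)) hV (range_subset_range.mpr (by omega)) zero_le_one zero_le_two (by positivity)
    fun j hj => by
      rw [one_pow, one_mul]; exact pow_le_pow_right₀ one_le_two (by rw [mem_range] at hj; omega)
  rw [show (1 : ℝ) + 2 = 3 by norm_num, three_pow_eq_of_add_eq (Nat.add_sub_of_le hJ)] at h
  refine le_of_mul_le_mul_right (h.trans_eq ?_) (by positivity)
  ring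

theorem sum_Ico_choose_half_mul_choose_half_le {V m K : ℕ} (hV : 2 * m ≤ V) (hK : K < m) :
    ∑ j ∈ Ico (K + 1) (m + 1), ((V / 2).choose j : ℝ) * ((V - V / 2).choose (m - j) : ℝ) ≤
      3 * 2 ^ (m - (K + 1)) * (3 / 4) ^ m * V.choose m := by
  have h := sum_choose_half_mul_choose_half_mul_le (m := m) (s := Ico (K + 1) (m + 1)) (x := 2)
    (y := 1) (c := 2 ^ (K + 1)) hV (fun j hj => by rw [mem_Ico] at hj; rw [mem_range]; omega) zero_le_two zero_le_one
    (by positivity) fun j hj => by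
      rw [one_pow, mul_one]; exact pow_le_pow_right₀ one_le_two (by rw [mem_Ico] at hj; omega)
  rw [show (2 : ℝ) + 1 = 3 by norm_num,
    three_pow_eq_of_add_eq (show m - (K + 1) + (K + 1) = m by omega)] at h
  refine le_of_mul_le_mul_right (h.trans_eq ?_) (by positivity)
  ring

theorem sum_tails_choose_half_mul_choose_half_le {V m J : ℕ} (hV : 2 * m ≤ V) (hJ : m ≤ 3 * J + 2)
    (hJm : 2 * J < m) :
    ∑ j ∈ range (J + 1), ((V / 2).choose j : ℝ) * ((V - V / 2).choose (m - j) : ℝ) +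
        ∑ j ∈ Ico (2 * J + 1) (m + 1), ((V / 2).choose j : ℝ) * ((V - V / 2).choose (m - j) : ℝ) ≤
      9 * (2 ^ J * (3 / 4) ^ m) * V.choose m := by
  have hlow := sum_range_choose_half_mul_choose_half_le hV (show J ≤ m by omega)
  have hhigh := sum_Ico_choose_half_mul_choose_half_le hV hJm
  have hpow : (2 : ℝ) ^ (m - (2 * J + 1)) ≤ 2 * 2 ^ J := by
    rw [← pow_succ']; exact pow_le_pow_right₀ one_le_two (by omega)
  have hq : (0 : ℝ) ≤ 3 * (3 / 4) ^ m * V.choose m := by positivity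
  nlinarith [mul_le_mul_of_nonneg_right hpow hq]

theorem two_pow_mul_three_quarters_pow_le_exp {J m : ℕ} (h : 3 * J ≤ m) :
    (2 : ℝ) ^ J * (3 / 4) ^ m ≤ Real.exp (-(m : ℝ) / 24) := by
  obtain ⟨r, rfl⟩ := Nat.exists_eq_add_of_le h
  have hexp : Real.exp (-((3 * J + r : ℕ) : ℝ) / 24) =
      Real.exp (-1 / 8) ^ J * Real.exp (-1 / 24) ^ r := by
    rw [← Real.exp_nat_mul, ← Real.exp_nat_mul, ← Real.exp_add]; push_cast; ring_nf
  have h₁ : (27 / 32 : ℝ) ≤ Real.exp (-1 / 8) := by linarith [Real.add_one_le_exp (-1 / 8)]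
  have h₂ : (3 / 4 : ℝ) ≤ Real.exp (-1 / 24) := by linarith [Real.add_one_le_exp (-1 / 24)]
  calc (2 : ℝ) ^ J * (3 / 4) ^ (3 * J + r) = (27 / 32) ^ J * (3 / 4) ^ r := by
        rw [pow_add, pow_mul, ← mul_assoc, ← mul_pow]; norm_num
    _ ≤ _ := by rw [hexp]; gcongr

theorem stmt_6 (V m : ℕ) (hm : 24 ≤ m) (hV : 2 * m ≤ V) :
    (Nat.choose V m : ℝ) * (1 - (2 * (m : ℝ) / 3) * Real.exp (-(m : ℝ) / 24)) ≤
      ∑ j ∈ Finset.Icc (m / 3 + 1) (2 * (m / 3)),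
        ((Nat.choose (V / 2) j : ℝ) * (Nat.choose (V - V / 2) (m - j) : ℝ)) := by
  set J := m / 3
  set t : ℕ → ℝ := fun j => (Nat.choose (V / 2) j : ℝ) * (Nat.choose (V - V / 2) (m - j) : ℝ)
  have hvandermonde : (V.choose m : ℝ) = ∑ j ∈ range (J + 1), t j +
      ∑ j ∈ Icc (J + 1) (2 * J), t j + ∑ j ∈ Ico (2 * J + 1) (m + 1), t j := by
    have h := Nat.add_choose_eq (V / 2) (V - V / 2) m
    rw [Nat.add_sub_cancel' (Nat.div_le_self V 2), Nat.sum_antidiagonal_eq_sum_range_succ_mk] at h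
    rw [h, ← Ico_add_one_right_eq_Icc, add_assoc, sum_Ico_consecutive _ (by omega) (by omega),
      sum_range_add_sum_Ico _ (by omega)]
    push_cast; rfl
  have htails := sum_tails_choose_half_mul_choose_half_le hV (show m ≤ 3 * J + 2 by omega)
    (show 2 * J < m by omega)
  have hdecay := two_pow_mul_three_quarters_pow_le_exp (show 3 * J ≤ m by omega)
  have hm' : (9 : ℝ) ≤ 2 * m / 3 := by
    have : (24 : ℝ) ≤ m := by exact_mod_cast hm
    linarith
  calc (V.choose m : ℝ) * (1 - 2 * m / 3 * Real.exp (-(m : ℝ) / 24))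
      ≤ V.choose m - 9 * (2 ^ J * (3 / 4) ^ m) * V.choose m := by
        have : 9 * (2 ^ J * (3 / 4) ^ m) * (V.choose m : ℝ) ≤
            2 * m / 3 * Real.exp (-(m : ℝ) / 24) * V.choose m := by gcongr
        linarith
    _ ≤ ∑ j ∈ Icc (J + 1) (2 * J), t j := by linarith
end

section
/- Let V, m, k, u be natural numbers with k ≤ m, m ≤ k + u, and k + u ≤ V. Then (V.factorial / (k.factorial * u.factorial * (V - k - u).factorial)) * Nat.choose u (m - k) = Nat.choose V m * Nat.choose m k * Nat.choose (V - m) (k + u - m). Equivalently, the multinomial coefficient V!/(k!·u!·(V−k−u)!) times C(u, m−k) equals C(V,m)·C(m,k)·C(V−m, k+u−m). -/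
/-!
Both sides count ordered triples of disjoint subsets of a `V`-set of sizes `k`, `m - k` and
`k + u - m`. Writing the multinomial coefficient as `C(V, k) * C(V - k, u)`, the identity is two
applications of the subset-of-a-subset rule `C(n, a) * C(a, b) = C(n, b) * C(n - b, a - b)`.
-/

namespace Nat

theorem factorial_div_factorial_mul_factorial_mul_factorial {V k u : ℕ} (h : k + u ≤ V) :
    V ! / (k ! * u ! * (V - k - u)!) = V.choose k * (V - k).choose u := by
  apply Nat.div_eq_of_eq_mul_left (by positivity)
  rw [← choose_mul_factorial_mul_factorial (show k ≤ V by omega),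
    ← choose_mul_factorial_mul_factorial (show u ≤ V - k by omega), Nat.sub_sub]
  ring

end Nat

theorem stmt_7 (V m k u : ℕ) (hkm : k ≤ m) (hmu : m ≤ k + u) (hV : k + u ≤ V) :
    (V.factorial / (k.factorial * u.factorial * (V - k - u).factorial)) *
        Nat.choose u (m - k) =
      Nat.choose V m * Nat.choose m k * Nat.choose (V - m) (k + u - m) := by
  rw [Nat.factorial_div_factorial_mul_factorial_mul_factorial hV, mul_assoc,
    Nat.choose_mul (show m - k ≤ u by omega), Nat.choose_mul hkm,
    show V - k - (m - k) = V - m by omega, show u - (m - k) = k + u - m by omega, mul_assoc]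
end

section
/- For all natural numbers U, V, n with V ≥ 1, we have Nat.choose (U / V) n * V ^ n ≤ Nat.choose U n, where U / V denotes integer division. -/
/-!
Choosing `n` of the `m` blocks of size `V` and then one element inside each chosen block picks
`n` distinct elements of `[U]` whenever `m * V ≤ U`. Arithmetically: each of the `n` factors of
the falling factorial `m (m-1) ⋯ (m-n+1) Vⁿ` satisfies `(m - i) V ≤ U - i`, and dividing by `n!`
gives the bound on binomial coefficients.
-/

namespace Nat

theorem sub_mul_le_sub_of_mul_le {m V U : ℕ} (h : m * V ≤ U) (i : ℕ) :
    (m - i) * V ≤ U - i := by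
  rcases Nat.eq_zero_or_pos V with rfl | hV
  · simp
  · calc (m - i) * V = m * V - i * V := Nat.sub_mul _ _ _
      _ ≤ U - i := tsub_le_tsub h (Nat.le_mul_of_pos_right i hV)

theorem descFactorial_mul_pow_le_of_mul_le {m V U : ℕ} (h : m * V ≤ U) (n : ℕ) :
    m.descFactorial n * V ^ n ≤ U.descFactorial n := by
  rw [descFactorial_eq_prod_range, descFactorial_eq_prod_range, Finset.pow_eq_prod_const,
    ← Finset.prod_mul_distrib]
  exact Finset.prod_le_prod' fun i _ => sub_mul_le_sub_of_mul_le h i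

theorem choose_mul_pow_le_of_mul_le {m V U : ℕ} (h : m * V ≤ U) (n : ℕ) :
    m.choose n * V ^ n ≤ U.choose n := by
  have key := descFactorial_mul_pow_le_of_mul_le h n
  rw [descFactorial_eq_factorial_mul_choose, descFactorial_eq_factorial_mul_choose,
    Nat.mul_assoc] at key
  exact Nat.le_of_mul_le_mul_left key n.factorial_pos

end Nat

theorem stmt_8_general (U V n : ℕ) :
    Nat.choose (U / V) n * V ^ n ≤ Nat.choose U n :=
  Nat.choose_mul_pow_le_of_mul_le (Nat.div_mul_le_self U V) n

theorem stmt_8 (U V n : ℕ) (hV : 1 ≤ V) :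
    Nat.choose (U / V) n * V ^ n ≤ Nat.choose U n :=
  stmt_8_general U V n
end
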